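/- arXiv:1009.5543 — 6 statements merged into one kernel-verified Lean document; each statement's English description precedes it below -/
import Mathlib

section
/- Let F be an algebraically closed field and n ≥ 3. For any two non-scalar matrices A, B ∈ M_n(F), there exist non-scalar matrices R₁, R₂, R₃ such that A commutes with R₁, R₁ commutes with R₂, R₂ commutes with R₃, and R₃ commutes with B. Hence the distance between any two vertices in the commuting graph Γ(M_n(F)) is at most four. -/
open Matrix

/-- A matrix is scalar if it is a scalar multiple of the identity. -/
def IsScalarM {F : Type*} [Field F] {n : ℕ} (A : Matrix (Fin n) (Fin n) F) : Prop :=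
  ∃ c : F, A = c • (1 : Matrix (Fin n) (Fin n) F)

/-- The commuting graph of `M_n(F)`: vertices are the non-scalar matrices, with an
edge between two distinct matrices whenever they commute. -/
def CommGraph (F : Type*) [Field F] (n : ℕ) :
    SimpleGraph {A : Matrix (Fin n) (Fin n) F // ¬ IsScalarM A} where
  Adj X Y := X ≠ Y ∧ X.1 * Y.1 = Y.1 * X.1
  symm := ⟨fun X Y h => ⟨h.1.symm, h.2.symm⟩⟩
  loopless := ⟨fun X h => h.1 rfl⟩

/-- The `k × k` nilpotent upper-triangular Jordan block. -/
def Jblock (F : Type*) [Field F] (k : ℕ) : Matrix (Fin k) (Fin k) F :=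
  Matrix.of fun i j => if (i : ℕ) + 1 = (j : ℕ) then 1 else 0

/-
A matrix `A` over an algebraically closed field has an eigenvalue `μ`, and then both a right
eigenvector `v` and a left eigenvector `u` for `μ`; the rank-one matrix `v uᵀ` commutes with `A`
and is not scalar once `n ≥ 2`. Doing this for `A` and `B` gives `R₁ = v uᵀ` and `R₃ = v' u'ᵀ`.
Since `n ≥ 3`, there are nonzero `w ⊥ u, u'` and `z ⊥ v, v'`, and `R₂ = w zᵀ` has zero products
with `R₁` and `R₃` on both sides.
-/

namespace Matrix

variable {m F : Type*} [Fintype m] [Field F]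

theorem exists_vecMul_eq_smul_of_mulVec_eq_smul [DecidableEq m] {A : Matrix m m F} {μ : F}
    {v : m → F} (hv : v ≠ 0) (hAv : A *ᵥ v = μ • v) : ∃ u ≠ 0, u ᵥ* A = μ • u := by
  have hdet : (A - μ • 1).det = 0 :=
    exists_mulVec_eq_zero_iff.mp ⟨v, hv, by rw [sub_mulVec, smul_mulVec, one_mulVec, hAv, sub_self]⟩
  obtain ⟨u, hu, huA⟩ := exists_vecMul_eq_zero_iff.mpr hdet
  refine ⟨u, hu, sub_eq_zero.mp ?_⟩
  rwa [vecMul_sub, vecMul_smul, vecMul_one] at huA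

theorem exists_eigenvalue_mulVec_vecMul [DecidableEq m] [Nonempty m] [IsAlgClosed F]
    (A : Matrix m m F) :
    ∃ (μ : F) (v u : m → F), v ≠ 0 ∧ u ≠ 0 ∧ A *ᵥ v = μ • v ∧ u ᵥ* A = μ • u := by
  obtain ⟨μ, hμ⟩ := Module.End.exists_eigenvalue A.mulVecLin
  obtain ⟨v, hv⟩ := hμ.exists_hasEigenvector
  have hAv : A *ᵥ v = μ • v := hv.apply_eq_smul
  obtain ⟨u, hu, huA⟩ := exists_vecMul_eq_smul_of_mulVec_eq_smul hv.2 hAv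
  exact ⟨μ, v, u, hv.2, hu, hAv, huA⟩

theorem exists_ne_zero_dotProduct_eq_zero (hm : 2 < Fintype.card m) (u u' : m → F) :
    ∃ w ≠ 0, u ⬝ᵥ w = 0 ∧ u' ⬝ᵥ w = 0 := by
  have hker : LinearMap.ker (of ![u, u']).mulVecLin ≠ ⊥ :=
    LinearMap.ker_ne_bot_of_finrank_lt (by simpa using hm)
  obtain ⟨w, hw, hw0⟩ := (Submodule.ne_bot_iff _).mp hker
  have hw' : of ![u, u'] *ᵥ w = 0 := hw
  exact ⟨w, hw0, congrFun hw' 0, congrFun hw' 1⟩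

theorem commute_vecMulVec_of_eigenvectors {R : Type*} [CommSemiring R] {A : Matrix m m R} {μ : R}
    {v u : m → R} (hv : A *ᵥ v = μ • v) (hu : u ᵥ* A = μ • u) : Commute A (vecMulVec v u) := by
  rw [Commute, SemiconjBy, mul_vecMulVec, vecMulVec_mul, hv, hu, smul_vecMulVec, vecMulVec_smul]

theorem commute_vecMulVec_of_dotProduct_eq_zero {R : Type*} [CommSemiring R] {v u w z : m → R}
    (huw : u ⬝ᵥ w = 0) (hzv : z ⬝ᵥ v = 0) : Commute (vecMulVec v u) (vecMulVec w z) := by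
  rw [Commute, SemiconjBy, vecMulVec_mul_vecMulVec, vecMulVec_mul_vecMulVec, huw, hzv,
    zero_smul, zero_smul, vecMulVec_zero, vecMulVec_zero]

end Matrix

section Fin

variable {F : Type*} [Field F] {n : ℕ}

theorem not_isScalarM_vecMulVec (hn : 2 ≤ n) {v u : Fin n → F} (hv : v ≠ 0) (hu : u ≠ 0) :
    ¬ IsScalarM (vecMulVec v u) := by
  rintro ⟨c, hc⟩
  have hc0 : c ≠ 0 := by
    rintro rfl
    exact vecMulVec_ne_zero hv hu (by rw [hc, zero_smul])
  have hrank : (vecMulVec v u).rank = n := by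
    rw [hc, rank_smul_of_mem_nonZeroDivisors _ (mem_nonZeroDivisors_of_ne_zero hc0), rank_one,
      Fintype.card_fin]
  have := rank_vecMulVec_le v u
  omega

theorem exists_nonscalar_commute_chain [IsAlgClosed F] (hn : 3 ≤ n)
    (A B : Matrix (Fin n) (Fin n) F) :
    ∃ R₁ R₂ R₃ : Matrix (Fin n) (Fin n) F,
      ¬ IsScalarM R₁ ∧ ¬ IsScalarM R₂ ∧ ¬ IsScalarM R₃ ∧
      Commute A R₁ ∧ Commute R₁ R₂ ∧ Commute R₂ R₃ ∧ Commute R₃ B := by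
  have : Nonempty (Fin n) := ⟨⟨0, by omega⟩⟩
  have hcard : 2 < Fintype.card (Fin n) := by rw [Fintype.card_fin]; omega
  obtain ⟨μ, v, u, hv, hu, hAv, huA⟩ := exists_eigenvalue_mulVec_vecMul A
  obtain ⟨μ', v', u', hv', hu', hBv', hu'B⟩ := exists_eigenvalue_mulVec_vecMul B
  obtain ⟨w, hw, huw, hu'w⟩ := exists_ne_zero_dotProduct_eq_zero hcard u u'
  obtain ⟨z, hz, hvz, hv'z⟩ := exists_ne_zero_dotProduct_eq_zero hcard v v'
  rw [dotProduct_comm] at hvz hv'z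
  refine ⟨vecMulVec v u, vecMulVec w z, vecMulVec v' u', not_isScalarM_vecMulVec (by omega) hv hu,
    not_isScalarM_vecMulVec (by omega) hw hz, not_isScalarM_vecMulVec (by omega) hv' hu',
    commute_vecMulVec_of_eigenvectors hAv huA, commute_vecMulVec_of_dotProduct_eq_zero huw hvz,
    (commute_vecMulVec_of_dotProduct_eq_zero hu'w hv'z).symm,
    (commute_vecMulVec_of_eigenvectors hBv' hu'B).symm⟩

theorem CommGraph.exists_walk_length_le_one {X Y : {A : Matrix (Fin n) (Fin n) F // ¬ IsScalarM A}}
    (h : Commute X.1 Y.1) : ∃ p : (CommGraph F n).Walk X Y, p.length ≤ 1 := by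
  by_cases hXY : X = Y
  · subst hXY
    exact ⟨.nil, zero_le_one⟩
  · exact ⟨.cons ⟨hXY, h⟩ .nil, le_rfl⟩

end Fin

theorem stmt2 (F : Type*) [Field F] [IsAlgClosed F] (n : ℕ) (hn : 3 ≤ n)
    (A B : Matrix (Fin n) (Fin n) F) (hA : ¬ IsScalarM A) (hB : ¬ IsScalarM B) :
    (∃ R₁ R₂ R₃ : Matrix (Fin n) (Fin n) F,
      ¬ IsScalarM R₁ ∧ ¬ IsScalarM R₂ ∧ ¬ IsScalarM R₃ ∧
      A * R₁ = R₁ * A ∧ R₁ * R₂ = R₂ * R₁ ∧ R₂ * R₃ = R₃ * R₂ ∧ R₃ * B = B * R₃) ∧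
    (CommGraph F n).dist ⟨A, hA⟩ ⟨B, hB⟩ ≤ 4 := by
  obtain ⟨R₁, R₂, R₃, h₁, h₂, h₃, hA₁, h₁₂, h₂₃, h₃B⟩ := exists_nonscalar_commute_chain hn A B
  refine ⟨⟨R₁, R₂, R₃, h₁, h₂, h₃, hA₁, h₁₂, h₂₃, h₃B⟩, ?_⟩
  obtain ⟨p₁, hp₁⟩ := CommGraph.exists_walk_length_le_one (X := ⟨A, hA⟩) (Y := ⟨R₁, h₁⟩) hA₁
  obtain ⟨p₂, hp₂⟩ := CommGraph.exists_walk_length_le_one (X := ⟨R₁, h₁⟩) (Y := ⟨R₂, h₂⟩) h₁₂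
  obtain ⟨p₃, hp₃⟩ := CommGraph.exists_walk_length_le_one (X := ⟨R₂, h₂⟩) (Y := ⟨R₃, h₃⟩) h₂₃
  obtain ⟨p₄, hp₄⟩ := CommGraph.exists_walk_length_le_one (X := ⟨R₃, h₃⟩) (Y := ⟨B, hB⟩) h₃B
  calc (CommGraph F n).dist ⟨A, hA⟩ ⟨B, hB⟩ ≤ (p₁.append (p₂.append (p₃.append p₄))).length :=
        SimpleGraph.dist_le _
    _ ≤ 4 := by simp only [SimpleGraph.Walk.length_append]; omega
end

section
/- Let A = J_{k₁} ⊕ J_{k₂} ∈ M_{k₁+k₂}(F) be a nilpotent matrix which is a direct sum of two nilpotent Jordan cells of sizes k₁, k₂ ≥ 1. Then for every rank-one matrix R ∈ M_{k₁+k₂}(F) there exists a non-scalar matrix Z commuting with both A and R; in particular d(A, R) ≤ 2 in the commuting graph. -/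
open Matrix

/-! The first basis vectors of the two Jordan blocks lie in the kernel of `A`, so
`rank A + 2 ≤ n`. As `rank R ≤ 1`, the matrices `A` and `R` have a common nonzero kernel vector
`p`, and so do `Aᵀ` and `Rᵀ` (a vector `q`). Then `Z = p qᵀ` has rank one, hence is not scalar
(`n ≥ 2`), and `ZA = AZ = ZR = RZ = 0`. -/

open Module

theorem LinearMap.exists_mem_ne_zero_map_eq_zero_of_finrank_range_lt {K V W : Type*}
    [DivisionRing K] [AddCommGroup V] [Module K V] [FiniteDimensional K V]
    [AddCommGroup W] [Module K W] (g : V →ₗ[K] W) {U : Submodule K V}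
    (h : finrank K (range g) < finrank K U) : ∃ v ∈ U, v ≠ 0 ∧ g v = 0 := by
  obtain ⟨⟨v, hvU⟩, hvker, hv0⟩ :=
    Submodule.exists_mem_ne_zero_of_ne_bot
      (ker_ne_bot_of_finrank_lt (f := g.rangeRestrict.domRestrict U) h)
  refine ⟨v, hvU, fun hv0' => hv0 (Subtype.ext hv0'), ?_⟩
  simpa using congrArg Subtype.val (mem_ker.1 hvker)

namespace Matrix

variable {F : Type*} [Field F] {ι m m' : Type*} [Fintype ι]

theorem rank_add_finrank_ker_mulVecLin (M : Matrix m ι F) :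
    M.rank + finrank F (LinearMap.ker M.mulVecLin) = Fintype.card ι := by
  rw [rank, LinearMap.finrank_range_add_finrank_ker, finrank_fintype_fun_eq_card]

theorem exists_ne_zero_mulVec_eq_zero_of_rank_add_rank_lt (M : Matrix m ι F)
    (N : Matrix m' ι F) (h : M.rank + N.rank < Fintype.card ι) :
    ∃ v : ι → F, v ≠ 0 ∧ M *ᵥ v = 0 ∧ N *ᵥ v = 0 := by
  obtain ⟨v, hvM, hv0, hvN⟩ :=
    N.mulVecLin.exists_mem_ne_zero_map_eq_zero_of_finrank_range_lt
      (U := LinearMap.ker M.mulVecLin)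
      (by have := M.rank_add_finrank_ker_mulVecLin; change N.rank < _; omega)
  exact ⟨v, hv0, hvM, hvN⟩

theorem rank_add_two_le_of_col_eq_zero [DecidableEq ι] (M : Matrix m ι F) {u w : ι}
    (huw : u ≠ w) (hu : ∀ i, M i u = 0) (hw : ∀ i, M i w = 0) :
    M.rank + 2 ≤ Fintype.card ι := by
  have hindep : LinearIndependent F ![(Pi.single u 1 : ι → F), Pi.single w 1] :=
    LinearIndependent.pair_iff.2 fun s t hst =>
      ⟨by simpa [huw] using congrFun hst u, by simpa [huw.symm] using congrFun hst w⟩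
  have hspan : Submodule.span F (Set.range ![(Pi.single u 1 : ι → F), Pi.single w 1]) ≤
      LinearMap.ker M.mulVecLin := by
    rw [Submodule.span_le, Set.range_subset_iff]
    intro i
    fin_cases i <;> ext i <;> simp [mulVec_single, hu, hw]
  have := Submodule.finrank_mono hspan
  rw [finrank_span_eq_card hindep, Fintype.card_fin] at this
  have := M.rank_add_finrank_ker_mulVecLin
  omega

theorem exists_vecMulVec_mul_eq_zero_of_rank_add_rank_lt [DecidableEq ι] (M N : Matrix ι ι F)
    (h : M.rank + N.rank < Fintype.card ι) :
    ∃ p q : ι → F, p ≠ 0 ∧ q ≠ 0 ∧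
      vecMulVec p q * M = 0 ∧ M * vecMulVec p q = 0 ∧
      vecMulVec p q * N = 0 ∧ N * vecMulVec p q = 0 := by
  obtain ⟨p, hp0, hpM, hpN⟩ := exists_ne_zero_mulVec_eq_zero_of_rank_add_rank_lt M N h
  obtain ⟨q, hq0, hqM, hqN⟩ := exists_ne_zero_mulVec_eq_zero_of_rank_add_rank_lt Mᵀ Nᵀ
    (by rwa [rank_transpose, rank_transpose])
  rw [mulVec_transpose] at hqM hqN
  exact ⟨p, q, hp0, hq0, by simp [vecMulVec_mul, hqM], by simp [mul_vecMulVec, hpM],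
    by simp [vecMulVec_mul, hqN], by simp [mul_vecMulVec, hpN]⟩

end Matrix

theorem not_isScalarM_of_rank_lt {F : Type*} [Field F] {n : ℕ}
    {Z : Matrix (Fin n) (Fin n) F} (hZ : Z ≠ 0) (h : Z.rank < n) : ¬ IsScalarM Z := by
  rintro ⟨c, rfl⟩
  have hc : c ≠ 0 := by rintro rfl; exact hZ (zero_smul F _)
  rw [rank_smul_of_mem_nonZeroDivisors _ (mem_nonZeroDivisors_of_ne_zero hc), rank_one,
    Fintype.card_fin] at h
  exact h.false

theorem exists_not_isScalarM_commute_of_rank_add_two_le {F : Type*} [Field F] {n : ℕ}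
    (M N : Matrix (Fin n) (Fin n) F) (hM : M.rank + 2 ≤ n) (hN : N.rank ≤ 1) :
    ∃ Z : Matrix (Fin n) (Fin n) F, ¬ IsScalarM Z ∧ Z * M = M * Z ∧ Z * N = N * Z := by
  obtain ⟨p, q, hp, hq, hZM, hMZ, hZN, hNZ⟩ :=
    exists_vecMulVec_mul_eq_zero_of_rank_add_rank_lt M N (by rw [Fintype.card_fin]; omega)
  have hZ : ¬ IsScalarM (vecMulVec p q) :=
    not_isScalarM_of_rank_lt (vecMulVec_ne_zero hp hq)
      ((rank_vecMulVec_le p q).trans_lt (by omega))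
  exact ⟨vecMulVec p q, hZ, hZM.trans hMZ.symm, hZN.trans hNZ.symm⟩

theorem CommGraph.dist_le_two_of_commute {F : Type*} [Field F] {n : ℕ}
    {X Y : {A : Matrix (Fin n) (Fin n) F // ¬ IsScalarM A}} {Z : Matrix (Fin n) (Fin n) F}
    (hZ : ¬ IsScalarM Z) (hZX : Z * X.1 = X.1 * Z) (hZY : Z * Y.1 = Y.1 * Z) :
    (CommGraph F n).dist X Y ≤ 2 := by
  by_cases hXY : X.1 * Y.1 = Y.1 * X.1
  · obtain rfl | hne := eq_or_ne X Y
    · simp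
    · have adjXY : (CommGraph F n).Adj X Y := ⟨hne, hXY⟩
      exact (SimpleGraph.dist_le adjXY.toWalk).trans (by simp)
  · have adjXZ : (CommGraph F n).Adj X ⟨Z, hZ⟩ :=
      ⟨fun h => hXY (by subst h; exact hZY), hZX.symm⟩
    have adjZY : (CommGraph F n).Adj ⟨Z, hZ⟩ Y :=
      ⟨fun h => hXY (by subst h; exact hZX.symm), hZY⟩
    exact (SimpleGraph.dist_le (adjXZ.toWalk.append adjZY.toWalk)).trans (by simp)

theorem rank_fromBlocks_Jblock_add_two_le (F : Type*) [Field F] {k₁ k₂ : ℕ}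
    (h₁ : 1 ≤ k₁) (h₂ : 1 ≤ k₂) :
    ((fromBlocks (Jblock F k₁) 0 0 (Jblock F k₂)).submatrix finSumFinEquiv.symm
      finSumFinEquiv.symm).rank + 2 ≤ k₁ + k₂ := by
  refine (rank_add_two_le_of_col_eq_zero _ (u := finSumFinEquiv (.inl ⟨0, h₁⟩))
    (w := finSumFinEquiv (.inr ⟨0, h₂⟩)) (by simp; omega) ?_ ?_).trans_eq
    (Fintype.card_fin _) <;>
  · intro i
    rw [submatrix_apply, Equiv.symm_apply_apply]
    rcases finSumFinEquiv.symm i with a | b <;> simp [Jblock]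

theorem stmt3 (F : Type*) [Field F] (k₁ k₂ : ℕ) (h₁ : 1 ≤ k₁) (h₂ : 1 ≤ k₂)
    (A : Matrix (Fin (k₁ + k₂)) (Fin (k₁ + k₂)) F)
    (hA : A = (Matrix.fromBlocks (Jblock F k₁) 0 0 (Jblock F k₂)).submatrix
      finSumFinEquiv.symm finSumFinEquiv.symm)
    (R : Matrix (Fin (k₁ + k₂)) (Fin (k₁ + k₂)) F) (hR : R.rank = 1) :
    (∃ Z : Matrix (Fin (k₁ + k₂)) (Fin (k₁ + k₂)) F,
      ¬ IsScalarM Z ∧ Z * A = A * Z ∧ Z * R = R * Z) ∧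
    (∀ (hA' : ¬ IsScalarM A) (hR' : ¬ IsScalarM R),
      (CommGraph F (k₁ + k₂)).dist ⟨A, hA'⟩ ⟨R, hR'⟩ ≤ 2) := by
  obtain ⟨Z, hZ, hZA, hZR⟩ := exists_not_isScalarM_commute_of_rank_add_two_le A R
    (hA ▸ rank_fromBlocks_Jblock_add_two_le F h₁ h₂) hR.le
  exact ⟨⟨Z, hZ, hZA, hZR⟩, fun _ _ => CommGraph.dist_le_two_of_commute hZ hZA hZR⟩
end

section
/- Let F be an algebraically closed field and A ∈ M_n(F) a non-scalar matrix that is maximal with respect to the centralizer inclusion preorder (C(A) ⊆ C(X) implies C(A) = C(X) or X scalar). Then A = αI + βP for a non-scalar idempotent P and β ≠ 0, or A = αI + βN for a nonzero square-zero matrix N and β ≠ 0. -/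
open Matrix

/-!
Over an algebraically closed field, the minimal polynomial of a non-scalar `A` either has a
repeated root or is a product of two coprime non-constant factors. Accordingly some polynomial
`f(A)` is a nonzero square-zero matrix or an idempotent different from `0` and `1`. As
`C(A) ⊆ C(f(A))` and `f(A)` is not scalar, maximality gives `C(A) = C(f(A))`, so `A` lies in the
bicommutant of `f(A)`. For an idempotent or square-zero `E` that bicommutant is `span {1, E}`;
the key fact is that `M * Y * N = N * Y * M` for all `Y` and `N ≠ 0` force `M ∈ F ∙ N` (test
against matrix units).
-/

open Polynomial

namespace Matrix

variable {F m : Type*} [Field F] [Fintype m] [DecidableEq m]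

theorem exists_eq_smul_of_forall_mul_mul_eq {M N : Matrix m m F} (hN : N ≠ 0)
    (h : ∀ X, M * X * N = N * X * M) : ∃ c : F, M = c • N := by
  obtain ⟨i, j, hij⟩ : ∃ i j, N i j ≠ 0 := by
    by_contra! h0
    exact hN (Matrix.ext h0)
  refine ⟨M i j / N i j, Matrix.ext fun k l => ?_⟩
  have hkl : M k l * N i j = N k l * M i j := by
    simpa only [mul_apply, single_apply, ite_and, mul_ite, mul_one, mul_zero, ite_mul, zero_mul,
      Finset.sum_ite_eq, Finset.mem_univ, if_true] using congr_fun₂ (h (single l i 1)) k j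
  rw [smul_apply, smul_eq_mul]
  field_simp
  linear_combination hkl

theorem exists_mul_eq_smul_of_forall_commute_mul_mul {A R : Matrix m m F} (hAR : A * R = R * A)
    (h : ∀ X, A * (R * X * R) = R * X * R * A) : ∃ c : F, A * R = c • R := by
  rcases eq_or_ne R 0 with rfl | hR
  · exact ⟨0, by simp⟩
  refine exists_eq_smul_of_forall_mul_mul_eq hR fun X => ?_
  calc A * R * X * R = A * (R * X * R) := by simp only [mul_assoc]
    _ = R * X * R * A := h X
    _ = R * X * (A * R) := by rw [hAR, mul_assoc (R * X)]

theorem exists_eq_smul_one_add_smul_of_isIdempotentElem {A P : Matrix m m F}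
    (hP : IsIdempotentElem P) (hA : ∀ Y, P * Y = Y * P → A * Y = Y * A) :
    ∃ a b : F, A = a • 1 + b • P := by
  have corner : ∀ R : Matrix m m F, IsIdempotentElem R →
      (∀ Y, R * Y = Y * R → A * Y = Y * A) → ∃ c : F, A * R = c • R :=
    fun R hR hAR => exists_mul_eq_smul_of_forall_commute_mul_mul (hAR R rfl) fun X => hAR _ <| by
      rw [← mul_assoc, ← mul_assoc, hR.eq, mul_assoc _ R R, hR.eq]
  obtain ⟨c, hc⟩ := corner P hP hA
  obtain ⟨d, hd⟩ := corner (1 - P) hP.one_sub fun Y hY => hA Y <| by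
    simpa only [sub_mul, mul_sub, one_mul, mul_one, sub_right_inj] using hY
  refine ⟨d, c - d, ?_⟩
  calc A = A * P + A * (1 - P) := by rw [mul_sub, mul_one, add_sub_cancel]
    _ = d • 1 + (c - d) • P := by rw [hc, hd]; module

theorem exists_eq_smul_one_add_smul_of_mul_self_eq_zero {A N : Matrix m m F}
    (hN : N * N = 0) (hN0 : N ≠ 0) (hA : ∀ Y, N * Y = Y * N → A * Y = Y * A) :
    ∃ a b : F, A = a • 1 + b • N := by
  have hAN : A * N = N * A := hA N rfl
  obtain ⟨a, ha⟩ := exists_mul_eq_smul_of_forall_commute_mul_mul hAN fun X => hA _ <| by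
    rw [← mul_assoc, ← mul_assoc, hN, mul_assoc _ N N, hN, zero_mul, zero_mul, mul_zero]
  set B := A - a • 1 with hB
  have hBN : B * N = 0 := by rw [hB, sub_mul, ha, smul_mul, one_mul, sub_self]
  have hNB : N * B = 0 := by rw [hB, mul_sub, ← hAN, ha, Matrix.mul_smul, mul_one, sub_self]
  obtain ⟨b, hb⟩ : ∃ b : F, B = b • N := exists_eq_smul_of_forall_mul_mul_eq hN0 fun X => by
    have hcomm : N * (N * X + X * N) = (N * X + X * N) * N := by
      rw [mul_add, add_mul, ← mul_assoc, hN, mul_assoc X, hN, zero_mul, mul_zero, zero_add,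
        add_zero, mul_assoc]
    have hBX : B * (N * X + X * N) = (N * X + X * N) * B := by
      rw [hB, sub_mul, mul_sub, hA _ hcomm, smul_mul, one_mul, Matrix.mul_smul, mul_one]
    rw [mul_add, add_mul, ← mul_assoc, hBN, zero_mul, zero_add, mul_assoc X, hNB, mul_zero,
      add_zero] at hBX
    rwa [mul_assoc]
  exact ⟨a, b, by rw [← hb, hB, add_sub_cancel]⟩

end Matrix

section Minpoly

variable {F S : Type*} [Field F] [Ring S] [Algebra F S] {a : S}

theorem aeval_ne_zero_of_natDegree_lt_minpoly {p : F[X]} (hp : p ≠ 0)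
    (hlt : p.natDegree < (minpoly F a).natDegree) : aeval a p ≠ 0 := fun h =>
  hlt.not_ge (natDegree_le_natDegree (minpoly.degree_le_of_ne_zero F a hp h))

theorem exists_isIdempotentElem_aeval_of_minpoly_eq_mul {p q : F[X]} (hμ : minpoly F a = p * q)
    (hpq : IsCoprime p q) (hp : 0 < p.natDegree) (hq : 0 < q.natDegree) :
    ∃ r : F[X], IsIdempotentElem (aeval a r) ∧ aeval a r ≠ 0 ∧ aeval a r ≠ 1 := by
  obtain ⟨s, t, hst⟩ := hpq
  have hp0 : p ≠ 0 := ne_zero_of_natDegree_gt hp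
  have hq0 : q ≠ 0 := ne_zero_of_natDegree_gt hq
  have hdeg : (minpoly F a).natDegree = p.natDegree + q.natDegree := by
    rw [hμ, natDegree_mul hp0 hq0]
  have hμ0 : aeval a (p * q) = 0 := hμ ▸ minpoly.aeval F a
  have hcompl : 1 - aeval a (t * q) = aeval a (s * p) := by
    rw [← map_one (aeval (R := F) a), ← hst, map_add, add_sub_cancel_right]
  have hkill_p : aeval a (t * q) * aeval a p = 0 := by
    rw [← map_mul, mul_assoc, mul_comm q, map_mul, hμ0, mul_zero]
  have hkill_q : (1 - aeval a (t * q)) * aeval a q = 0 := by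
    rw [hcompl, ← map_mul, mul_assoc, map_mul, hμ0, mul_zero]
  -- Bezout: `t * q` is `1` modulo `p` and `0` modulo `q`.
  refine ⟨t * q, ?_, fun h => ?_, fun h => ?_⟩
  · have h : aeval a (t * q) * (1 - aeval a (t * q)) = 0 := by
      rw [hcompl, ← map_mul, mul_mul_mul_comm, mul_comm q, map_mul, hμ0, mul_zero]
    rw [mul_sub, mul_one, sub_eq_zero] at h
    exact h.symm
  · rw [h, sub_zero, one_mul] at hkill_q
    exact aeval_ne_zero_of_natDegree_lt_minpoly hq0 (by omega) hkill_q
  · rw [h, one_mul] at hkill_p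
    exact aeval_ne_zero_of_natDegree_lt_minpoly hp0 (by omega) hkill_p

theorem exists_aeval_mul_self_eq_zero_of_minpoly_eq_sq_mul (ha : IsIntegral F a) {p q : F[X]}
    (hμ : minpoly F a = p ^ 2 * q) (hp : 0 < p.natDegree) :
    ∃ r : F[X], aeval a r * aeval a r = 0 ∧ aeval a r ≠ 0 := by
  have hp0 : p ≠ 0 := ne_zero_of_natDegree_gt hp
  have hq0 : q ≠ 0 := right_ne_zero_of_mul (hμ ▸ minpoly.ne_zero ha)
  refine ⟨p * q, ?_, aeval_ne_zero_of_natDegree_lt_minpoly (mul_ne_zero hp0 hq0) ?_⟩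
  · rw [← map_mul, show p * q * (p * q) = p ^ 2 * q * q by ring, ← hμ, map_mul,
      minpoly.aeval, zero_mul]
  · rw [hμ, natDegree_mul (pow_ne_zero 2 hp0) hq0, natDegree_mul hp0 hq0, natDegree_pow]
    omega

end Minpoly

namespace Polynomial

variable {F : Type*} [Field F] [IsAlgClosed F]

theorem exists_sq_dvd_or_eq_mul_isCoprime {μ : F[X]} (hμ : 2 ≤ μ.natDegree) :
    (∃ p q : F[X], μ = p ^ 2 * q ∧ 0 < p.natDegree) ∨
      ∃ p q : F[X], μ = p * q ∧ IsCoprime p q ∧ 0 < p.natDegree ∧ 0 < q.natDegree := by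
  have hμ0 : μ ≠ 0 := ne_zero_of_natDegree_gt hμ
  obtain ⟨α, hα⟩ := IsAlgClosed.exists_root μ fun h => by
    rw [degree_eq_natDegree hμ0, Nat.cast_eq_zero] at h
    omega
  obtain ⟨g, rfl⟩ := dvd_iff_isRoot.mpr hα
  have hg0 : g ≠ 0 := right_ne_zero_of_mul hμ0
  by_cases hdvd : X - C α ∣ g
  · obtain ⟨q, rfl⟩ := hdvd
    exact Or.inl ⟨X - C α, q, by ring, by rw [natDegree_X_sub_C]; exact one_pos⟩
  · refine Or.inr ⟨X - C α, g, rfl, (irreducible_X_sub_C α).coprime_iff_not_dvd.mpr hdvd,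
      by rw [natDegree_X_sub_C]; exact one_pos, ?_⟩
    rw [natDegree_mul (X_sub_C_ne_zero α) hg0, natDegree_X_sub_C] at hμ
    omega

end Polynomial

section Scalar

variable {F S : Type*} [Field F] [Ring S] [Algebra F S]

theorem IsIdempotentElem.notMem_range_algebraMap {e : S} (he : IsIdempotentElem e) (h0 : e ≠ 0)
    (h1 : e ≠ 1) : e ∉ (algebraMap F S).range := by
  rintro ⟨c, rfl⟩
  have : Nontrivial S := ⟨⟨_, 0, h0⟩⟩
  have hc : IsIdempotentElem c := (algebraMap F S).injective (by rw [map_mul]; exact he)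
  rcases IsIdempotentElem.iff_eq_zero_or_one.mp hc with rfl | rfl
  · exact h0 (map_zero _)
  · exact h1 (map_one _)

theorem notMem_range_algebraMap_of_mul_self_eq_zero {x : S} (hx : x * x = 0) (h0 : x ≠ 0) :
    x ∉ (algebraMap F S).range := by
  rintro ⟨c, rfl⟩
  have : Nontrivial S := ⟨⟨_, 0, h0⟩⟩
  have hc : c * c = 0 := (algebraMap F S).injective (by rw [map_mul, hx, map_zero])
  exact h0 (by rw [mul_self_eq_zero.mp hc, map_zero])

theorem exists_aeval_isIdempotentElem_or_mul_self_eq_zero [IsAlgClosed F] {a : S}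
    (ha : IsIntegral F a) (hscalar : a ∉ (algebraMap F S).range) :
    ∃ r : F[X], (IsIdempotentElem (aeval a r) ∧ aeval a r ≠ 0 ∧ aeval a r ≠ 1) ∨
      (aeval a r * aeval a r = 0 ∧ aeval a r ≠ 0) := by
  have : Nontrivial S := not_subsingleton_iff_nontrivial.mp fun _ =>
    hscalar ⟨0, Subsingleton.elim _ _⟩
  rcases exists_sq_dvd_or_eq_mul_isCoprime ((minpoly.two_le_natDegree_iff ha).mpr hscalar) with
    ⟨p, q, hμ, hp⟩ | ⟨p, q, hμ, hpq, hp, hq⟩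
  · obtain ⟨r, hr⟩ := exists_aeval_mul_self_eq_zero_of_minpoly_eq_sq_mul ha hμ hp
    exact ⟨r, Or.inr hr⟩
  · obtain ⟨r, hr⟩ := exists_isIdempotentElem_aeval_of_minpoly_eq_mul hμ hpq hp hq
    exact ⟨r, Or.inl hr⟩

end Scalar

theorem isScalarM_iff_mem_range_algebraMap {F : Type*} [Field F] {n : ℕ}
    {A : Matrix (Fin n) (Fin n) F} : IsScalarM A ↔ A ∈ (algebraMap F _).range := by
  simp only [IsScalarM, RingHom.mem_range, Algebra.algebraMap_eq_smul_one, eq_comm]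

theorem stmt7 (F : Type*) [Field F] [IsAlgClosed F] (n : ℕ)
    (A : Matrix (Fin n) (Fin n) F) (hA : ¬ IsScalarM A)
    (hmax : ∀ X : Matrix (Fin n) (Fin n) F,
      {Y : Matrix (Fin n) (Fin n) F | A * Y = Y * A} ⊆ {Y | X * Y = Y * X} →
      {Y : Matrix (Fin n) (Fin n) F | A * Y = Y * A} = {Y | X * Y = Y * X} ∨ IsScalarM X) :
    (∃ (α β : F) (P : Matrix (Fin n) (Fin n) F),
      P * P = P ∧ ¬ IsScalarM P ∧ β ≠ 0 ∧ A = α • 1 + β • P) ∨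
    (∃ (α β : F) (N : Matrix (Fin n) (Fin n) F),
      N * N = 0 ∧ N ≠ 0 ∧ β ≠ 0 ∧ A = α • 1 + β • N) := by
  have bicommutant : ∀ r : F[X], ¬ IsScalarM (aeval A r) →
      ∀ Y, aeval A r * Y = Y * aeval A r → A * Y = Y * A := by
    intro r hr Y hY
    have hsub : {Y | A * Y = Y * A} ⊆ {Y | aeval A r * Y = Y * aeval A r} := fun Y hAY =>
      ((Algebra.commute_of_mem_adjoin_singleton_of_commute (aeval_mem_adjoin_singleton F A)
        (Commute.symm hAY)).symm).eq
    show Y ∈ {Y | A * Y = Y * A}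
    rwa [(hmax _ hsub).resolve_right hr]
  have hβ : ∀ {α β : F} {X}, A = α • 1 + β • X → β ≠ 0 := by
    rintro α β X rfl rfl
    exact hA ⟨α, by rw [zero_smul, add_zero]⟩
  rw [isScalarM_iff_mem_range_algebraMap] at hA
  obtain ⟨r, ⟨hP, hP0, hP1⟩ | ⟨hN, hN0⟩⟩ :=
    exists_aeval_isIdempotentElem_or_mul_self_eq_zero (IsIntegral.of_finite F A) hA
  · have hPs : ¬ IsScalarM (aeval A r) := by
      rw [isScalarM_iff_mem_range_algebraMap]; exact hP.notMem_range_algebraMap hP0 hP1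
    obtain ⟨α, β, h⟩ := exists_eq_smul_one_add_smul_of_isIdempotentElem hP (bicommutant r hPs)
    exact Or.inl ⟨α, β, _, hP.eq, hPs, hβ h, h⟩
  · have hNs : ¬ IsScalarM (aeval A r) := by
      rw [isScalarM_iff_mem_range_algebraMap]
      exact notMem_range_algebraMap_of_mul_self_eq_zero hN hN0
    obtain ⟨α, β, h⟩ :=
      exists_eq_smul_one_add_smul_of_mul_self_eq_zero hN hN0 (bicommutant r hNs)
    exact Or.inr ⟨α, β, _, hN, hN0, hβ h, h⟩
end

section
/- Let P, Q ∈ M_n(F) be idempotents with rank P ≤ n/2 and rank Q ≤ n/2, where P is a diagonal 0-1 idempotent (a sum of distinct E_{σ(i)σ(i)}) and Q = S⁻¹ P' S with P' also a diagonal 0-1 idempotent and S invertible with all entries and all minors nonzero. Then PQ ≠ QP. -/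
/-!
If `P` commutes with `Q = S⁻¹ P' S`, then `S (P Q) = P' S P`. So every column `v` of `P Q` is
supported on `s` while `S v` vanishes on the complement of `t`; since `#s ≤ n / 2 ≤ #tᶜ`, a
nonsingular `#s × #s` minor of `S` forces `v = 0`. Hence `P S⁻¹ P' = 0`, i.e. `S⁻¹` has a zero
entry, which the same minor argument (with `n - 1` rows and columns) rules out.
-/

open Matrix Function Finset

namespace Matrix

variable {m n : Type*}

theorem sum_single_one_eq_diagonal {α : Type*} [AddCommMonoidWithOne α] [Fintype n] [DecidableEq n]
    (s : Finset n) :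
    ∑ i ∈ s, single i i (1 : α) = diagonal fun i => if i ∈ s then 1 else 0 := by
  rw [← sum_single_eq_diagonal]
  simp [apply_ite, Finset.sum_ite_mem]

variable {R : Type*} [CommRing R]

def TotallyNonsingular (S : Matrix m n R) : Prop :=
  ∀ (k : ℕ) (f : Fin k → m) (g : Fin k → n), Injective f → Injective g →
    (S.submatrix f g).det ≠ 0

namespace TotallyNonsingular

variable {S : Matrix m n R}

theorem det_submatrix_ne_zero (hS : S.TotallyNonsingular) {ι : Type*} [Fintype ι] [DecidableEq ι]
    {f : ι → m} {g : ι → n} (hf : Injective f) (hg : Injective g) :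
    (S.submatrix f g).det ≠ 0 := by
  let e := Fintype.equivFin ι
  have h := hS _ _ _ (hf.comp e.symm.injective) (hg.comp e.symm.injective)
  rwa [← submatrix_submatrix, det_submatrix_equiv_self] at h

theorem eq_zero_of_mulVec_eq_zero_on [Fintype n] [NoZeroDivisors R] (hS : S.TotallyNonsingular)
    {v : n → R} {A : Finset n} {B : Finset m} (hv : ∀ j ∉ A, v j = 0)
    (hSv : ∀ i ∈ B, (S *ᵥ v) i = 0) (hAB : #A ≤ #B) : v = 0 := by
  classical
  obtain ⟨e⟩ : Nonempty (A ↪ B) := Embedding.nonempty_of_card_le (by simpa using hAB)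
  have hsub : S.submatrix (fun a => (e a : m)) (fun a : A => (a : n)) *ᵥ (fun a => v a) = 0 := by
    ext a
    have hsum : (S *ᵥ v) (e a) = ∑ j ∈ A, S (e a) j * v j :=
      (Finset.sum_subset (subset_univ A) fun j _ hj => by rw [hv j hj, mul_zero]).symm
    rw [hSv _ (e a).2, ← Finset.sum_coe_sort] at hsum
    exact hsum.symm
  have hA := eq_zero_of_mulVec_eq_zero
    (hS.det_submatrix_ne_zero (Subtype.val_injective.comp e.injective) Subtype.val_injective) hsub
  ext j
  by_cases hj : j ∈ A
  · exact congrFun hA ⟨j, hj⟩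
  · exact hv j hj

theorem eq_zero_of_mul_eq_zero_on [Fintype n] [NoZeroDivisors R] {l : Type*}
    (hS : S.TotallyNonsingular) {X : Matrix n l R} {A : Finset n} {B : Finset m}
    (hX : ∀ i ∉ A, ∀ j, X i j = 0) (hSX : ∀ i ∈ B, ∀ j, (S * X) i j = 0) (hAB : #A ≤ #B) :
    X = 0 := by
  ext i j
  have hcol := hS.eq_zero_of_mulVec_eq_zero_on (v := fun r => X r j) (fun r hr => hX r hr j)
    (fun r hr => hSX r hr j) hAB
  exact congrFun hcol i

theorem det_ne_zero [Fintype n] [DecidableEq n] {S : Matrix n n R} (hS : S.TotallyNonsingular) :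
    S.det ≠ 0 := by
  simpa using hS.det_submatrix_ne_zero injective_id injective_id

theorem inv_apply_ne_zero {F : Type*} [Field F] [Fintype n] [DecidableEq n] {S : Matrix n n F}
    (hS : S.TotallyNonsingular) (i k : n) : S⁻¹ i k ≠ 0 := by
  intro hik
  have hSinv : S * S⁻¹ = 1 := mul_nonsing_inv S (isUnit_iff_ne_zero.mpr hS.det_ne_zero)
  have hmulVec : ∀ r, (S *ᵥ fun r => S⁻¹ r k) r = (1 : Matrix n n F) r k := fun r => by
    rw [← hSinv]; rfl
  have hcol : (fun r => S⁻¹ r k) = 0 := by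
    refine hS.eq_zero_of_mulVec_eq_zero_on (A := {i}ᶜ) (B := {k}ᶜ) (fun r hr => ?_)
      (fun r hr => ?_) (by rw [card_compl, card_compl, card_singleton, card_singleton])
    · rw [mem_compl, not_not, mem_singleton] at hr
      rwa [hr]
    · rw [hmulVec, one_apply_ne (by simpa using hr)]
  simpa [hcol] using hmulVec k

end TotallyNonsingular

end Matrix

theorem stmt11_general (F : Type*) [Field F] (n : ℕ)
    (s t : Finset (Fin n)) (hs : s.Nonempty) (ht : t.Nonempty)
    (hscard : 2 * s.card ≤ n) (htcard : 2 * t.card ≤ n)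
    (P P' : Matrix (Fin n) (Fin n) F)
    (hP : P = ∑ i ∈ s, Matrix.single i i (1 : F))
    (hP' : P' = ∑ i ∈ t, Matrix.single i i (1 : F))
    (S : Matrix (Fin n) (Fin n) F)
    (hminors : ∀ (k : ℕ) (f g : Fin k → Fin n), Function.Injective f →
      Function.Injective g → (S.submatrix f g).det ≠ 0) :
    P * (S⁻¹ * P' * S) ≠ (S⁻¹ * P' * S) * P := by
  intro hcomm
  have hS : S.TotallyNonsingular := hminors
  have hSinv : S * S⁻¹ = 1 := mul_nonsing_inv S (isUnit_iff_ne_zero.mpr hS.det_ne_zero)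
  rw [sum_single_one_eq_diagonal] at hP hP'
  have hst : #s ≤ #tᶜ := by rw [card_compl, Fintype.card_fin]; omega
  have hSPQ : S * (P * (S⁻¹ * P' * S)) = P' * (S * P) := by
    rw [hcomm, ← mul_assoc, ← mul_assoc, ← mul_assoc, hSinv, one_mul, mul_assoc]
  have hPQ : P * (S⁻¹ * P' * S) = 0 := by
    refine hS.eq_zero_of_mul_eq_zero_on (fun i hi j => ?_) (fun i hi j => ?_) hst
    · rw [hP, diagonal_mul, if_neg hi, zero_mul]
    · rw [hSPQ, hP', diagonal_mul, if_neg (mem_compl.mp hi), zero_mul]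
  have hPSP' : P * S⁻¹ * P' = 0 :=
    calc P * S⁻¹ * P' = P * (S⁻¹ * P' * S) * S⁻¹ := by simp only [mul_assoc, hSinv, mul_one]
      _ = 0 := by rw [hPQ, zero_mul]
  obtain ⟨i, hi⟩ := hs
  obtain ⟨k, hk⟩ := ht
  apply hS.inv_apply_ne_zero i k
  simpa [hP, hP', hi, hk] using congrFun₂ hPSP' i k

theorem stmt11 (F : Type*) [Field F] (n : ℕ) (hn : 3 ≤ n)
    (s t : Finset (Fin n)) (hs : s.Nonempty) (ht : t.Nonempty)
    (hscard : 2 * s.card ≤ n) (htcard : 2 * t.card ≤ n)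
    (P P' : Matrix (Fin n) (Fin n) F)
    (hP : P = ∑ i ∈ s, Matrix.single i i (1 : F))
    (hP' : P' = ∑ i ∈ t, Matrix.single i i (1 : F))
    (S : Matrix (Fin n) (Fin n) F) (hS : IsUnit S)
    (hminors : ∀ (k : ℕ) (f g : Fin k → Fin n), Function.Injective f →
      Function.Injective g → (S.submatrix f g).det ≠ 0) :
    P * (S⁻¹ * P' * S) ≠ (S⁻¹ * P' * S) * P :=
  stmt11_general F n s t hs ht hscard htcard P P' hP hP' S hminors
end

section
/- Let F be an algebraically closed field and n ≥ 3. There exist an infinite family (X_α) of non-scalar matrices in M_n(F) and a rank-one matrix Z such that d(X_α, X_β) = 4 in the commuting graph for all α ≠ β, and d(X_α, Z) = 2 for all α. -/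
open Matrix

/-!
`X_α := companion n α` is the companion matrix of `X ^ n - α X`, with cyclic vector `e₀`, so
`p ↦ p(X_α) e₀` identifies `F[X] ⧸ (X ^ n - α X)` with `Fⁿ` and a matrix `C` commuting with `X_α`
acts on `p(X_α) e₀` as multiplication by the polynomial `c` with `c(X_α) e₀ = C e₀`. Let non-scalar
`C`, `D` commute with `X_α`, `X_β` and with each other, normalised so that `c(0) = d(0) = 0`. Then
`C e_{n-1} = α C e₀` and `D e_{n-1} = β D e₀`, so `α ≠ β` forces `C D e₀ = 0`: the product `c d`,
of degree at most `2n - 2`, vanishes modulo both `X ^ n - α X` and `X ^ n - β X`, hence `c d = 0`,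
which is absurd. So no path of length at most 3 joins `X_α` and `X_β`, while
`X_α — W_α — E₁₁ — W_β — X_β` is a path, where `W_α = u e₀ᵀ` with `u = e_{n-1} - α e₀` spanning
`ker X_α` is killed on both sides by `X_α` and by `E₁₁`, and `X_α` does not commute with `E₁₁`.
-/

open Polynomial

lemma Commute.aeval_right {R A : Type*} [CommSemiring R] [Semiring A] [Algebra R A] {a c : A}
    (h : Commute c a) (p : R[X]) : Commute c (aeval a p) :=
  Algebra.commute_of_mem_adjoin_singleton_of_commute (aeval_mem_adjoin_singleton R a) h

lemma Commute.mulVec_aeval_mulVec {R m : Type*} [CommSemiring R] [Fintype m] [DecidableEq m]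
    {A C : Matrix m m R} (hC : Commute C A) {w : m → R} {q : R[X]}
    (hq : C *ᵥ w = aeval A q *ᵥ w) (p : R[X]) :
    C *ᵥ (aeval A p *ᵥ w) = aeval A (p * q) *ᵥ w := by
  rw [mulVec_mulVec, (hC.aeval_right p).eq, ← mulVec_mulVec, hq, mulVec_mulVec, aeval_mul]

lemma Polynomial.natDegree_lt_of_mem_degreeLT {R : Type*} [Semiring R] {n : ℕ} [NeZero n]
    {p : R[X]} (hp : p ∈ degreeLT R n) : p.natDegree < n := by
  rcases eq_or_ne p 0 with rfl | hp0
  · simpa using NeZero.pos n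
  · exact (natDegree_lt_iff_degree_lt hp0).2 (mem_degreeLT.1 hp)

lemma IsScalarM.commute {F : Type*} [Field F] {n : ℕ} {A : Matrix (Fin n) (Fin n) F}
    (h : IsScalarM A) (B : Matrix (Fin n) (Fin n) F) : Commute A B := by
  obtain ⟨c, rfl⟩ := h
  exact (Commute.one_left B).smul_left c

lemma IsScalarM.apply_eq_zero_of_ne {F : Type*} [Field F] {n : ℕ} {A : Matrix (Fin n) (Fin n) F}
    (h : IsScalarM A) {i j : Fin n} (hij : i ≠ j) : A i j = 0 := by
  obtain ⟨c, rfl⟩ := h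
  simp [one_apply_ne hij]

lemma Matrix.rank_single_self {F m : Type*} [Field F] [Fintype m] [DecidableEq m] (i : m) {c : F}
    (hc : c ≠ 0) : (single i i c).rank = 1 := by
  classical
  rw [← diagonal_single, rank_diagonal, Fintype.card_eq_one_iff]
  refine ⟨⟨i, by simpa using hc⟩, ?_⟩
  rintro ⟨j, hj⟩
  simp only [Subtype.mk.injEq]
  by_contra hji
  exact hj (by simp [hji])

lemma SimpleGraph.dist_eq_length_of_forall_le {V : Type*} {G : SimpleGraph V} {u v : V}
    (p : G.Walk u v) (hp : ∀ q : G.Walk u v, p.length ≤ q.length) : G.dist u v = p.length :=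
  le_antisymm (G.dist_le p) <| by
    obtain ⟨q, hq⟩ := p.reachable.exists_walk_length_eq_dist
    exact hq ▸ hp q

section Companion

variable {F : Type*} [Field F]

/-- The companion matrix of `X ^ n - α X`, acting on coefficient vectors in the basis
`1, X, …, X ^ (n - 1)`: it sends `e j` to `e (j + 1)` and `e (n - 1)` to `α • e 1`. -/
def companion (n : ℕ) (α : F) : Matrix (Fin n) (Fin n) F :=
  Matrix.of fun i j =>
    if (i : ℕ) = j + 1 then 1 else if (i : ℕ) = 1 ∧ (j : ℕ) + 1 = n then α else 0

variable {n : ℕ}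

lemma companion_mulVec_single (α : F) {j : Fin n} (hj : (j : ℕ) + 1 < n) :
    companion n α *ᵥ Pi.single j 1 = Pi.single ⟨j + 1, hj⟩ 1 := by
  ext i
  simp only [mulVec_single_one, col_apply, companion, of_apply, Pi.single_apply, Fin.ext_iff]
  split_ifs <;> first | rfl | omega

lemma not_commute_companion_single {i : Fin n} (hin : (i : ℕ) + 1 < n) (α : F) :
    ¬Commute (companion n α) (single i i 1) := by
  intro h
  have := congrFun (congrFun h.eq ⟨i + 1, hin⟩) i
  rw [mul_single_apply_same, single_mul_apply_of_ne _ _ _ _ _ (by simp [Fin.ext_iff])] at this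
  simp [companion] at this

variable [NeZero n]

section

variable (α : F)

lemma companion_pow_mulVec_single_zero (k : Fin n) :
    companion n α ^ (k : ℕ) *ᵥ Pi.single 0 1 = Pi.single k 1 := by
  obtain ⟨k, hk⟩ := k
  induction k with
  | zero => rw [pow_zero, one_mulVec]; rfl
  | succ k ih => rw [pow_succ', ← mulVec_mulVec, ih (by omega), companion_mulVec_single]

lemma companion_pow_self_mulVec_single_zero :
    companion n α ^ n *ᵥ Pi.single 0 1 = α • (companion n α *ᵥ Pi.single 0 1) := by
  obtain ⟨m, rfl⟩ : ∃ m, n = m + 1 := ⟨n - 1, by have := NeZero.ne n; omega⟩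
  have hlast := companion_pow_mulVec_single_zero α (Fin.last m)
  rw [Fin.val_last] at hlast
  rw [pow_succ', ← mulVec_mulVec, hlast]
  ext i
  have hi := i.isLt
  simp only [mulVec_single_one, col_apply, companion, of_apply, Pi.smul_apply, smul_eq_mul,
    Fin.val_last, Fin.val_zero, zero_add, add_left_inj, and_true]
  split_ifs <;> first | omega | simp_all

lemma single_zero_vecMul_companion : Pi.single 0 1 ᵥ* companion n α = 0 := by
  ext j
  simp [companion]

lemma aeval_companion_degreeLTEquiv_symm (v : Fin n → F) :
    aeval (companion n α) ((degreeLTEquiv F n).symm v : F[X]) *ᵥ Pi.single 0 1 = v := by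
  change aeval _ (∑ i : Fin n, monomial i (v i)) *ᵥ _ = v
  simp only [map_sum, aeval_monomial, sum_mulVec, ← Algebra.smul_def, smul_mulVec,
    companion_pow_mulVec_single_zero]
  exact (pi_eq_sum_univ' v).symm

lemma aeval_companion_mulVec_single_zero {p : F[X]} (hp : p ∈ degreeLT F n) :
    aeval (companion n α) p *ᵥ Pi.single 0 1 = degreeLTEquiv F n ⟨p, hp⟩ := by
  simpa using aeval_companion_degreeLTEquiv_symm α (degreeLTEquiv F n ⟨p, hp⟩)

lemma aeval_companion_X_pow_mul_mulVec_single_zero (q : F[X]) :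
    aeval (companion n α) (X ^ n * q) *ᵥ Pi.single 0 1
      = α • (aeval (companion n α) (X * q) *ᵥ Pi.single 0 1) := by
  rw [mul_comm, mul_comm X, aeval_mul, aeval_mul, ← mulVec_mulVec, ← mulVec_mulVec, aeval_X_pow,
    aeval_X, companion_pow_self_mulVec_single_zero, mulVec_smul]

end

lemma eq_zero_of_aeval_companion_mulVec_eq_zero {α β : F} (hαβ : α ≠ β) {g : F[X]}
    (hg : g.natDegree + 1 < 2 * n)
    (hα : aeval (companion n α) g *ᵥ Pi.single 0 1 = 0)
    (hβ : aeval (companion n β) g *ᵥ Pi.single 0 1 = 0) : g = 0 := by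
  have hr : g %ₘ X ^ n ∈ degreeLT F n := by
    rw [mem_degreeLT, ← degree_X_pow (R := F)]
    exact degree_modByMonic_lt g (monic_X_pow n)
  have hq : X * (g /ₘ X ^ n) ∈ degreeLT F n := by
    rcases lt_or_ge g.natDegree n with hgn | hgn
    · rw [(divByMonic_eq_zero_iff (monic_X_pow n)).2, mul_zero]
      · exact zero_mem _
      rw [degree_X_pow]
      exact degree_le_natDegree.trans_lt (by exact_mod_cast hgn)
    · refine mem_degreeLT.2 (degree_le_natDegree.trans_lt (WithBot.coe_lt_coe.2 ?_))
      calc (X * (g /ₘ X ^ n)).natDegree ≤ 1 + (g /ₘ X ^ n).natDegree :=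
            natDegree_mul_le.trans (by gcongr; exact natDegree_X_le)
        _ < n := by rw [natDegree_divByMonic _ (monic_X_pow n), natDegree_X_pow]; omega
  -- modulo `X ^ n - γ X`, the high part `X ^ n * q` of `g` reduces to `γ X q`
  have split : ∀ γ : F, aeval (companion n γ) g *ᵥ Pi.single 0 1
      = degreeLTEquiv F n ⟨_, hr⟩ + γ • degreeLTEquiv F n ⟨_, hq⟩ := by
    intro γ
    conv_lhs => rw [← modByMonic_add_div g (X ^ n)]
    rw [map_add, add_mulVec, aeval_companion_X_pow_mul_mulVec_single_zero,
      aeval_companion_mulVec_single_zero _ hr, aeval_companion_mulVec_single_zero _ hq]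
  rw [split] at hα hβ
  have hq0 : degreeLTEquiv F n ⟨_, hq⟩ = 0 := by
    have h := sub_eq_zero.2 (hα.trans hβ.symm)
    rwa [add_sub_add_left_eq_sub, ← sub_smul, smul_eq_zero, sub_eq_zero, or_iff_right hαβ] at h
  rw [hq0, smul_zero, add_zero] at hα
  rw [degreeLTEquiv_eq_zero_iff_eq_zero] at hα hq0
  rw [← modByMonic_add_div g (X ^ n), hα, (mul_eq_zero.1 hq0).resolve_left X_ne_zero,
    mul_zero, add_zero]

lemma eq_zero_of_commute_companion_of_mulVec_single_zero {γ : F} {C : Matrix (Fin n) (Fin n) F}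
    (hC : Commute C (companion n γ)) (h : C *ᵥ Pi.single 0 1 = 0) : C = 0 := by
  have h0 : C *ᵥ Pi.single 0 1 = aeval (companion n γ) (0 : F[X]) *ᵥ Pi.single 0 1 := by
    rw [h, map_zero, zero_mulVec]
  refine ext_iff_mulVec.2 fun v => ?_
  rw [← aeval_companion_degreeLTEquiv_symm γ v, hC.mulVec_aeval_mulVec h0, mul_zero,
    map_zero, zero_mulVec, zero_mulVec]

lemma mulVec_single_eq_smul_of_commute_companion {γ : F} {C : Matrix (Fin n) (Fin n) F}
    (hC : Commute C (companion n γ)) (hC0 : (C *ᵥ Pi.single 0 1) 0 = 0) {k : Fin n}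
    (hk : (k : ℕ) + 1 = n) : C *ᵥ Pi.single k 1 = γ • (C *ᵥ Pi.single 0 1) := by
  set c : F[X] := ((degreeLTEquiv F n).symm (C *ᵥ Pi.single 0 1) : F[X])
  have hc : C *ᵥ Pi.single 0 1 = aeval (companion n γ) c *ᵥ Pi.single 0 1 :=
    (aeval_companion_degreeLTEquiv_symm γ _).symm
  obtain ⟨c', hc'⟩ : X ∣ c := X_dvd_iff.2 <|
    (congrFun ((degreeLTEquiv F n).apply_symm_apply (C *ᵥ Pi.single 0 1)) 0).trans hC0
  rw [← companion_pow_mulVec_single_zero γ k, ← aeval_X_pow (R := F),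
    hC.mulVec_aeval_mulVec hc, hc', ← mul_assoc, ← pow_succ, hk,
    aeval_companion_X_pow_mul_mulVec_single_zero, ← hc', ← hc]

lemma eq_zero_or_eq_zero_of_commute_companion {α β : F} (hαβ : α ≠ β)
    {C D : Matrix (Fin n) (Fin n) F} (hC : Commute C (companion n α))
    (hD : Commute D (companion n β)) (hCD : Commute C D)
    (hC0 : (C *ᵥ Pi.single 0 1) 0 = 0) (hD0 : (D *ᵥ Pi.single 0 1) 0 = 0) :
    C = 0 ∨ D = 0 := by
  set e : Fin n → F := Pi.single 0 1
  set c := (degreeLTEquiv F n).symm (C *ᵥ e)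
  set d := (degreeLTEquiv F n).symm (D *ᵥ e)
  have hc : ∀ γ : F, C *ᵥ e = aeval (companion n γ) (c : F[X]) *ᵥ e :=
    fun γ => (aeval_companion_degreeLTEquiv_symm γ _).symm
  have hd : ∀ γ : F, D *ᵥ e = aeval (companion n γ) (d : F[X]) *ᵥ e :=
    fun γ => (aeval_companion_degreeLTEquiv_symm γ _).symm
  have hCDe : C *ᵥ (D *ᵥ e) = 0 := by
    have hk : (n - 1) + 1 = n := Nat.sub_add_cancel (NeZero.pos n)
    have h := congrArg (C *ᵥ ·)
      (mulVec_single_eq_smul_of_commute_companion hD hD0 (k := ⟨n - 1, by omega⟩) hk)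
    have h' := congrArg (D *ᵥ ·)
      (mulVec_single_eq_smul_of_commute_companion hC hC0 (k := ⟨n - 1, by omega⟩) hk)
    simp only [mulVec_mulVec, mulVec_smul] at h h'
    rw [← hCD.eq, h] at h'
    have : (β - α) • ((C * D) *ᵥ e) = 0 := by rw [sub_smul, h', sub_self]
    rw [mulVec_mulVec]
    exact (smul_eq_zero.1 this).resolve_left (sub_ne_zero.2 hαβ.symm)
  have hDCe : D *ᵥ (C *ᵥ e) = 0 := by rw [mulVec_mulVec, ← hCD.eq, ← mulVec_mulVec, hCDe]
  have hcd : (c : F[X]) * d = 0 := by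
    refine eq_zero_of_aeval_companion_mulVec_eq_zero (n := n) hαβ ?_ ?_ ?_
    · have := natDegree_lt_of_mem_degreeLT (n := n) c.2
      have := natDegree_lt_of_mem_degreeLT (n := n) d.2
      have := natDegree_mul_le (p := (c : F[X])) (q := d)
      omega
    · rw [mul_comm, ← hC.mulVec_aeval_mulVec (hc α), ← hd α, hCDe]
    · rw [← hD.mulVec_aeval_mulVec (hd β), ← hc β, hDCe]
  rcases mul_eq_zero.1 hcd with h | h
  · exact Or.inl <| eq_zero_of_commute_companion_of_mulVec_single_zero hC <| by
      simpa only [c, Submodule.coe_eq_zero, LinearEquiv.map_eq_zero_iff] using h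
  · exact Or.inr <| eq_zero_of_commute_companion_of_mulVec_single_zero hD <| by
      simpa only [d, Submodule.coe_eq_zero, LinearEquiv.map_eq_zero_iff] using h

lemma isScalarM_or_isScalarM_of_commute_companion {α β : F} (hαβ : α ≠ β)
    {C D : Matrix (Fin n) (Fin n) F} (hC : Commute C (companion n α))
    (hD : Commute D (companion n β)) (hCD : Commute C D) : IsScalarM C ∨ IsScalarM D := by
  set a := (C *ᵥ Pi.single 0 1) 0
  set b := (D *ᵥ Pi.single 0 1) 0
  have hs : ∀ (x : F) (M : Matrix (Fin n) (Fin n) F), Commute (x • 1) M :=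
    fun x M => (Commute.one_left M).smul_left x
  rcases eq_zero_or_eq_zero_of_commute_companion hαβ (C := C - a • 1) (D := D - b • 1)
    (hC.sub_left (hs a _)) (hD.sub_left (hs b _))
    ((hCD.sub_right (hs b C).symm).sub_left (hs a _)) (by simp [a]) (by simp [b]) with h | h
  · exact Or.inl ⟨a, sub_eq_zero.1 h⟩
  · exact Or.inr ⟨b, sub_eq_zero.1 h⟩

variable (n) in
/-- `u e₀ᵀ`, where `u = e (n - 1) - α e₀` spans the kernel of `companion n α`. -/
def companionAnnihilator (α : F) : Matrix (Fin n) (Fin n) F :=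
  vecMulVec (companion n α ^ (n - 1) *ᵥ Pi.single 0 1 - α • Pi.single 0 1) (Pi.single 0 1)

lemma companionAnnihilator_eq (α : F) :
    companionAnnihilator n α =
      vecMulVec (Pi.single ⟨n - 1, Nat.sub_one_lt (NeZero.ne n)⟩ 1 - α • Pi.single 0 1)
        (Pi.single 0 1) := by
  rw [companionAnnihilator, ← companion_pow_mulVec_single_zero α ⟨n - 1, _⟩]

lemma commute_companion_companionAnnihilator (α : F) :
    Commute (companion n α) (companionAnnihilator n α) := by
  have h1 : companion n α * companionAnnihilator n α = 0 := by
    rw [companionAnnihilator, mul_vecMulVec, mulVec_sub, mulVec_mulVec, ← pow_succ',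
      Nat.sub_add_cancel (NeZero.pos n), companion_pow_self_mulVec_single_zero, mulVec_smul,
      sub_self]
    ext; simp
  have h2 : companionAnnihilator n α * companion n α = 0 := by
    rw [companionAnnihilator, vecMulVec_mul, single_zero_vecMul_companion]
    ext; simp
  exact h1.trans h2.symm

lemma companionAnnihilator_apply_last_zero (hn : 1 < n) (α : F) :
    companionAnnihilator n α ⟨n - 1, Nat.sub_one_lt (NeZero.ne n)⟩ 0 = 1 := by
  rw [companionAnnihilator_eq, vecMulVec_apply]
  simp [Pi.single_apply, Fin.ext_iff]
  omega

lemma not_isScalarM_companionAnnihilator (hn : 1 < n) (α : F) :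
    ¬IsScalarM (companionAnnihilator n α) := fun h =>
  one_ne_zero <| (companionAnnihilator_apply_last_zero hn α).symm.trans <|
    h.apply_eq_zero_of_ne (by simp [Fin.ext_iff]; omega)

variable {i : Fin n}

lemma companionAnnihilator_ne_single (hi0 : i ≠ 0) (hin : (i : ℕ) + 1 < n) (α : F) :
    companionAnnihilator n α ≠ single i i 1 := by
  intro h
  have := companionAnnihilator_apply_last_zero (n := n) (by omega) α
  rw [h, single_apply_of_col_ne _ _ hi0] at this
  exact zero_ne_one this

lemma commute_single_companionAnnihilator (hi0 : i ≠ 0) (hin : (i : ℕ) + 1 < n) (α : F) :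
    Commute (single i i 1) (companionAnnihilator n α) := by
  have h1 : single i i 1 * companionAnnihilator n α = 0 := by
    have hu : (Pi.single (⟨n - 1, Nat.sub_one_lt (NeZero.ne n)⟩ : Fin n) (1 : F)
        - α • Pi.single 0 1 : Fin n → F) i = 0 := by
      simp [Pi.single_apply, Fin.ext_iff, hi0]
      omega
    rw [companionAnnihilator_eq, mul_vecMulVec, single_mulVec_eq, hu]
    simp
  have h2 : companionAnnihilator n α * single i i 1 = 0 := by
    rw [companionAnnihilator_eq, vecMulVec_mul, single_one_vecMul]
    ext a b
    simp [vecMulVec_apply, single_apply_of_row_ne hi0]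
  exact h1.trans h2.symm

end Companion

namespace CommGraph

variable {F : Type*} [Field F] {n : ℕ}

lemma adj_of_ne_of_commute {X Y : {A : Matrix (Fin n) (Fin n) F // ¬ IsScalarM A}}
    (hne : X.1 ≠ Y.1) (h : Commute X.1 Y.1) : (CommGraph F n).Adj X Y :=
  ⟨fun hXY => hne (congrArg Subtype.val hXY), h⟩

lemma commute_getVert_succ {u v : {A : Matrix (Fin n) (Fin n) F // ¬ IsScalarM A}}
    (w : (CommGraph F n).Walk u v) (i : ℕ) : Commute (w.getVert i).1 (w.getVert (i + 1)).1 := by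
  rcases lt_or_ge i w.length with hi | hi
  · exact (w.adj_getVert_succ hi).2
  · rw [w.getVert_of_length_le hi, w.getVert_of_length_le (by omega)]

lemma two_le_length_of_not_commute {u v : {A : Matrix (Fin n) (Fin n) F // ¬ IsScalarM A}}
    (h : ¬Commute u.1 v.1) (w : (CommGraph F n).Walk u v) : 2 ≤ w.length := by
  by_contra! hw
  have := commute_getVert_succ w 0
  rw [w.getVert_zero, zero_add, w.getVert_of_length_le (by omega)] at this
  exact h this

lemma four_le_length_of_companion [NeZero n] {α β : F} (hαβ : α ≠ β)
    {u v : {A : Matrix (Fin n) (Fin n) F // ¬ IsScalarM A}} (hu : u.1 = companion n α)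
    (hv : v.1 = companion n β) (w : (CommGraph F n).Walk u v) : 4 ≤ w.length := by
  by_contra! hw
  have h0 := commute_getVert_succ w 0
  have h2 := commute_getVert_succ w 2
  rw [w.getVert_zero, hu] at h0
  rw [w.getVert_of_length_le (show w.length ≤ 2 + 1 by omega), hv] at h2
  rcases isScalarM_or_isScalarM_of_commute_companion hαβ h0.symm h2
    (commute_getVert_succ w 1) with h | h
  · exact (w.getVert 1).2 h
  · exact (w.getVert 2).2 h

end CommGraph

open CommGraph in
theorem stmt12 (F : Type*) [Field F] [IsAlgClosed F] (n : ℕ) (hn : 3 ≤ n) :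
    ∃ (ι : Type) (_ : Infinite ι)
      (X : ι → {A : Matrix (Fin n) (Fin n) F // ¬ IsScalarM A})
      (Z : {A : Matrix (Fin n) (Fin n) F // ¬ IsScalarM A}),
      Z.1.rank = 1 ∧
      (∀ α β : ι, α ≠ β → (CommGraph F n).dist (X α) (X β) = 4) ∧
      (∀ α : ι, (CommGraph F n).dist (X α) Z = 2) := by
  have : NeZero n := ⟨by omega⟩
  let i : Fin n := ⟨1, by omega⟩
  have hi0 : i ≠ 0 := by simp [i, Fin.ext_iff]
  have hin : (i : ℕ) + 1 < n := by simp only [i]; omega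
  have hXZ (α : F) := not_commute_companion_single hin α
  let e := Infinite.natEmbedding F
  let X (a : ℕ) : {A : Matrix (Fin n) (Fin n) F // ¬ IsScalarM A} :=
    ⟨companion n (e a), fun h => hXZ _ (h.commute _)⟩
  let W (a : ℕ) : {A : Matrix (Fin n) (Fin n) F // ¬ IsScalarM A} :=
    ⟨companionAnnihilator n (e a), not_isScalarM_companionAnnihilator (by omega) _⟩
  let Z : {A : Matrix (Fin n) (Fin n) F // ¬ IsScalarM A} :=
    ⟨single i i 1, fun h => hXZ 0 (h.commute _).symm⟩
  have hXW (a : ℕ) : (CommGraph F n).Adj (X a) (W a) :=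
    adj_of_ne_of_commute (fun h : companion n (e a) = companionAnnihilator n (e a) =>
      hXZ (e a) (h ▸ commute_single_companionAnnihilator hi0 hin (e a)).symm)
      (commute_companion_companionAnnihilator _)
  have hWZ (a : ℕ) : (CommGraph F n).Adj (W a) Z :=
    adj_of_ne_of_commute (companionAnnihilator_ne_single hi0 hin _)
      (commute_single_companionAnnihilator hi0 hin _).symm
  refine ⟨ℕ, inferInstance, X, Z, rank_single_self i one_ne_zero, fun a b hab => ?_,
    fun a => ?_⟩
  · exact SimpleGraph.dist_eq_length_of_forall_le
      (.cons (hXW a) (.cons (hWZ a) (.cons (hWZ b).symm (.cons (hXW b).symm .nil))))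
      (four_le_length_of_companion (e.injective.ne hab) rfl rfl)
  · exact SimpleGraph.dist_eq_length_of_forall_le (.cons (hXW a) (.cons (hWZ a) .nil))
      (two_le_length_of_not_commute (hXZ _))
end

section
/- For n = 3 and an algebraically closed field F: for α ≠ β in F, the rank-one nilpotent matrices R_α = (0,1,α)ᵀ(0,α,−1) and R_β = (0,1,β)ᵀ(0,β,−1) do not commute, but both commute with E₁₁; hence d(R_α, R_β) = 2 in Γ(M₃(F)). -/
/-! `R_α` and `R_β` are rank-one matrices whose defining vectors vanish in the first
coordinate, so `E₁₁` annihilates each of them from both sides and is a common neighbour in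
the commuting graph. They do not commute, since comparing two entries of `R_α R_β` and
`R_β R_α` forces `(α - β)² = 0`. -/

open Matrix

theorem SimpleGraph.dist_eq_two_of_adj_of_adj {V : Type*} {G : SimpleGraph V} {u v w : V}
    (huv : u ≠ v) (hnadj : ¬ G.Adj u v) (huw : G.Adj u w) (hwv : G.Adj w v) :
    G.dist u v = 2 := by
  rw [SimpleGraph.dist, G.edist_eq_two_iff.mpr ⟨huv, hnadj, w, huw, hwv.symm⟩]
  rfl

namespace Matrix

variable {ι R : Type*} [Fintype ι] [DecidableEq ι] [NonUnitalNonAssocSemiring R]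

theorem vecMulVec_mul_single_self_eq_zero (u : ι → R) {v : ι → R} {i : ι} (hv : v i = 0)
    (c : R) : vecMulVec u v * single i i c = 0 := by
  ext a b
  by_cases hb : b = i
  · subst hb; simp [mul_single_apply_same, vecMulVec_apply, hv]
  · simp [mul_single_apply_of_ne (hbj := hb)]

theorem single_self_mul_vecMulVec_eq_zero {u : ι → R} (v : ι → R) {i : ι} (hu : u i = 0)
    (c : R) : single i i c * vecMulVec u v = 0 := by
  ext a b
  by_cases ha : a = i
  · subst ha; simp [single_mul_apply_same, vecMulVec_apply, hu]
  · simp [single_mul_apply_of_ne (h := ha)]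

theorem vecMulVec_commute_single_self {u v : ι → R} {i : ι} (hu : u i = 0) (hv : v i = 0)
    (c : R) : vecMulVec u v * single i i c = single i i c * vecMulVec u v := by
  rw [vecMulVec_mul_single_self_eq_zero u hv, single_self_mul_vecMulVec_eq_zero v hu]

end Matrix

theorem not_isScalarM_single_zero_zero (F : Type*) [Field F] (n : ℕ) :
    ¬ IsScalarM (single 0 0 1 : Matrix (Fin (n + 2)) (Fin (n + 2)) F) := by
  rintro ⟨c, hc⟩
  have h₀ : (1 : F) = c := by simpa using congrFun (congrFun hc 0) 0
  have h₁ : (0 : F) = c := by simpa using congrFun (congrFun hc 1) 1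
  exact one_ne_zero (h₀.trans h₁.symm)

section nilpotentR

variable {R : Type*}

def nilpotentR [Ring R] (α : R) : Matrix (Fin 3) (Fin 3) R :=
  vecMulVec ![0, 1, α] ![0, α, -1]

theorem nilpotentR_mul_single_zero_zero_comm [Ring R] (α c : R) :
    nilpotentR α * single 0 0 c = (single 0 0 c : Matrix (Fin 3) (Fin 3) R) * nilpotentR α :=
  vecMulVec_commute_single_self (i := 0) rfl rfl c

theorem nilpotentR_ne_single_zero_zero_one [Ring R] [Nontrivial R] (α : R) :
    nilpotentR α ≠ single 0 0 1 := fun h => by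
  simpa [nilpotentR] using congrFun (congrFun h 0) 0

theorem nilpotentR_mul_comm_ne [CommRing R] [IsReduced R] {α β : R} (hαβ : α ≠ β) :
    nilpotentR α * nilpotentR β ≠ nilpotentR β * nilpotentR α := by
  intro h
  have h₁₁ : α * β - β * β = β * α - α * α := by
    simpa [nilpotentR, mul_apply, Fin.sum_univ_three, ← sub_eq_add_neg] using
      congrFun (congrFun h 1) 1
  have h₁₂ : β - α = α - β := by
    simpa [nilpotentR, mul_apply, Fin.sum_univ_three, ← sub_eq_add_neg] using
      congrFun (congrFun h 1) 2
  have hsq : (α - β) ^ 2 = 0 := by linear_combination h₁₁ + β * h₁₂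
  exact hαβ (sub_eq_zero.mp (IsReduced.eq_zero _ ⟨2, hsq⟩))

end nilpotentR

theorem stmt13_general (F : Type*) [Field F] (α β : F) (hαβ : α ≠ β) :
    let Rα : Matrix (Fin 3) (Fin 3) F := vecMulVec ![0, 1, α] ![0, α, -1]
    let Rβ : Matrix (Fin 3) (Fin 3) F := vecMulVec ![0, 1, β] ![0, β, -1]
    let E : Matrix (Fin 3) (Fin 3) F := Matrix.single 0 0 1
    Rα * Rβ ≠ Rβ * Rα ∧ Rα * E = E * Rα ∧ Rβ * E = E * Rβ ∧
    ∀ (h₁ : ¬ IsScalarM Rα) (h₂ : ¬ IsScalarM Rβ),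
      (CommGraph F 3).dist ⟨Rα, h₁⟩ ⟨Rβ, h₂⟩ = 2 := by
  intro Rα Rβ E
  have hnc : Rα * Rβ ≠ Rβ * Rα := nilpotentR_mul_comm_ne hαβ
  have hαE : Rα * E = E * Rα := nilpotentR_mul_single_zero_zero_comm α 1
  have hβE : Rβ * E = E * Rβ := nilpotentR_mul_single_zero_zero_comm β 1
  refine ⟨hnc, hαE, hβE, fun h₁ h₂ => ?_⟩
  let e : {A : Matrix (Fin 3) (Fin 3) F // ¬ IsScalarM A} :=
    ⟨E, not_isScalarM_single_zero_zero F 1⟩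
  refine SimpleGraph.dist_eq_two_of_adj_of_adj (w := e) ?_ (fun h => hnc h.2)
    ⟨fun h => nilpotentR_ne_single_zero_zero_one α (congrArg Subtype.val h), hαE⟩
    ⟨fun h => nilpotentR_ne_single_zero_zero_one β (congrArg Subtype.val h).symm, hβE.symm⟩
  intro h
  exact hnc (by rw [show Rα = Rβ from congrArg Subtype.val h])

theorem stmt13 (F : Type*) [Field F] [IsAlgClosed F] (α β : F) (hαβ : α ≠ β) :
    let Rα : Matrix (Fin 3) (Fin 3) F := vecMulVec ![0, 1, α] ![0, α, -1]
    let Rβ : Matrix (Fin 3) (Fin 3) F := vecMulVec ![0, 1, β] ![0, β, -1]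
    let E : Matrix (Fin 3) (Fin 3) F := Matrix.single 0 0 1
    Rα * Rβ ≠ Rβ * Rα ∧ Rα * E = E * Rα ∧ Rβ * E = E * Rβ ∧
    ∀ (h₁ : ¬ IsScalarM Rα) (h₂ : ¬ IsScalarM Rβ),
      (CommGraph F 3).dist ⟨Rα, h₁⟩ ⟨Rβ, h₂⟩ = 2 :=
  stmt13_general F α β hαβ
end
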